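/- The graph G1 obtained from the 5-cycle u1u2u3u4u5 by adding the chord u2u5 admits no (2,2,2,2,2)-packing edge-coloring; that is, there is no partition of its 6 edges into 5 classes such that within each class any two distinct edges are at distance at least 3 (in fact each class can contain at most one edge). -/
import Mathlib


open SimpleGraph

/-- The distance between two edges: the minimum, over endpoints `a` of `e` and `b` of `f`,
of the vertex distance between `a` and `b` (as an extended natural number,
`⊤` when no endpoints are connected). -/
noncomputable def edgeDist {V : Type*} (G : SimpleGraph V) (e f : Sym2 V) : ℕ∞ :=
  sInf {d : ℕ∞ | ∃ a ∈ e, ∃ b ∈ f, G.edist a b = d}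

/-- An `S`-packing edge-coloring (in the closest-endpoint vertex-distance convention):
a map `c` assigning to each edge a color `i : Fin k` such that any two distinct
same-colored edges are at edge-distance at least `S i`.  A class with `S i = 1` is a
matching, `S i = 2` an induced matching, etc. -/
def IsPackingEdgeColoring {V : Type*} (G : SimpleGraph V) {k : ℕ} (S : Fin k → ℕ)
    (c : Sym2 V → Fin k) : Prop :=
  ∀ e ∈ G.edgeSet, ∀ f ∈ G.edgeSet, e ≠ f → c e = c f →
    (S (c e) : ℕ∞) ≤ edgeDist G e f

/-- The graph $G_1$: a 5-cycle $u_1u_2u_3u_4u_5$ plus the chord $u_2u_5$. -/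
def G1 : SimpleGraph (Fin 5) :=
  SimpleGraph.fromRel (fun a b =>
    (a, b) ∈ ([(0,1),(1,2),(2,3),(3,4),(4,0),(1,4)] : List (Fin 5 × Fin 5)))

instance : DecidableRel G1.Adj := fun a b =>
  decidable_of_iff _ (SimpleGraph.fromRel_adj _ a b).symm

lemma close_edges : ∀ e ∈ G1.edgeFinset, ∀ f ∈ G1.edgeFinset,
    ∃ a ∈ e, ∃ b ∈ f, a = b ∨ G1.Adj a b := by decide

lemma edgeDist_le_one {e f : Sym2 (Fin 5)} (he : e ∈ G1.edgeSet) (hf : f ∈ G1.edgeSet) :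
    edgeDist G1 e f ≤ 1 := by
  obtain ⟨a, ha, b, hb, hab⟩ := close_edges e (by simpa [SimpleGraph.mem_edgeFinset] using he)
    f (by simpa [SimpleGraph.mem_edgeFinset] using hf)
  have h1 : G1.edist a b ≤ 1 := by
    rcases hab with rfl | hadj
    · simp
    · exact le_of_eq ((SimpleGraph.edist_eq_one_iff_adj).2 hadj)
  calc edgeDist G1 e f ≤ G1.edist a b := sInf_le ⟨a, ha, b, hb, rfl⟩
    _ ≤ 1 := h1

/-- $G_1$ has no $(2^5)$-packing edge-coloring. -/
theorem stmt1 : ¬ ∃ c : Sym2 (Fin 5) → Fin 5,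
    IsPackingEdgeColoring G1 ![2,2,2,2,2] c := by
  rintro ⟨c, hc⟩
  have hcard : (Finset.univ : Finset (Fin 5)).card < G1.edgeFinset.card := by decide
  obtain ⟨e, he, f, hf, hne, hcef⟩ :=
    Finset.exists_ne_map_eq_of_card_lt_of_maps_to hcard
      (fun e _ => Finset.mem_univ (c e))
  have he' : e ∈ G1.edgeSet := SimpleGraph.mem_edgeFinset.1 he
  have hf' : f ∈ G1.edgeSet := SimpleGraph.mem_edgeFinset.1 hf
  have h2 := hc e he' f hf' hne hcef
  have hS : ∀ i : Fin 5, (![2,2,2,2,2] i : ℕ) = 2 := by decide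
  rw [hS] at h2
  have := h2.trans (edgeDist_le_one he' hf')
  norm_num at this
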